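/- Let r ≥ 3. For every ε > 0 there exists N such that for all n ≥ N, every family F of subsets of [n] = {1,…,n} containing no 1-focal family of size r satisfies |F| ≤ (1 + (r−2)/(r−1)^{(r−1)/(r−2)} + ε)^n. -/

import Mathlib

/-- A family consisting of a focus set `A₀` and `m` further sets `As 0, …, As (m-1)`
(viewed as subsets of `[n]`, i.e. characteristic vectors in `{0,1}^n`) is *1-focal with
focus `A₀`* if for every `i ∈ A₀`, at most one of the sets `As j` misses `i`
(equivalently, at least `m - 1` of the `m` characteristic-vector entries equal `1`). -/
def IsOneFocalWithFocus {n m : ℕ} (A₀ : Finset (Fin n)) (As : Fin m → Finset (Fin n)) : Prop :=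
  ∀ i ∈ A₀, ∀ j j' : Fin m, i ∉ As j → i ∉ As j' → j = j'

/-- A family `F` of subsets of `[n]` contains a 1-focal family of size `r` if some `r`
distinct members `A₀, As 0, …, As (r-2)` of `F` are 1-focal with focus `A₀`. -/
def ContainsOneFocalFamily {n : ℕ} (F : Finset (Finset (Fin n))) (r : ℕ) : Prop :=
  ∃ A₀ ∈ F, ∃ As : Fin (r - 1) → Finset (Fin n),
    (∀ j, As j ∈ F) ∧ Function.Injective As ∧ (∀ j, As j ≠ A₀) ∧ IsOneFocalWithFocus A₀ As

open Finset Function Filter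

/-!
For `A ∈ F` with `#A = a` put `t = r - 1`, `q = a / t`, `m = a - q`, and call a set `S` rare when
fewer than `r` members of `F` contain it. If `Q₁, …, Q_t` are disjoint `q`-subsets of `A` and no
`A \ Qⱼ` is rare, Hall's theorem picks distinct `Bⱼ ∈ F`, `Bⱼ ≠ A`, with `A \ Qⱼ ⊆ Bⱼ`, and then
`A, B₁, …, B_t` is 1-focal with focus `A`. Averaging over ordered `t`-tuples of disjoint `q`-subsets
of `A` shows that at least a `1/t` fraction of the `m`-subsets of `A` are rare. A rare set lies in
at most `t` members of `F`, so double counting gives `#{A ∈ F | #A = a} * C(a, m) ≤ t² C(n, m)`.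
Finally, with `x = (t-1) / t^(t/(t-1))`, the bounds `C(n, m) xᵐ ≤ (1 + x)ⁿ` and
`tᵃ ≤ (a + 1) C(a, m) (t-1)ᵐ` (the largest term of `((t-1) + 1)ᵃ` has index `m`) leave only a
polynomial factor in front of `(1 + x)ⁿ`, which is absorbed by `ε` for large `n`.
-/

section DisjointTuples

variable {α : Type*} [DecidableEq α]

theorem card_filter_sdiff_powersetCard {A : Finset α} {q : ℕ} (hq : q ≤ #A)
    (P : Finset α → Prop) [DecidablePred P] :
    #((A.powersetCard q).filter fun Q ↦ P (A \ Q)) = #((A.powersetCard (#A - q)).filter P) := by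
  apply card_nbij' (A \ ·) (A \ ·)
  · intro Q hQ
    simp only [coe_filter, mem_powersetCard, Set.mem_ofPred_eq] at hQ ⊢
    exact ⟨⟨sdiff_subset, by rw [card_sdiff_of_subset hQ.1.1, hQ.1.2]⟩, hQ.2⟩
  · intro S hS
    simp only [coe_filter, mem_powersetCard, Set.mem_ofPred_eq] at hS ⊢
    rw [card_sdiff_of_subset hS.1.1, hS.1.2, Nat.sub_sub_self hq, Finset.sdiff_sdiff_eq_self hS.1.1]
    exact ⟨⟨sdiff_subset, rfl⟩, hS.2⟩
  · intro Q hQ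
    exact Finset.sdiff_sdiff_eq_self (mem_powersetCard.1 (mem_filter.1 hQ).1).1
  · intro S hS
    exact Finset.sdiff_sdiff_eq_self (mem_powersetCard.1 (mem_filter.1 hS).1).1

def disjointTuples (A : Finset α) (q t : ℕ) : Finset (Fin t → Finset α) :=
  (Fintype.piFinset fun _ ↦ A.powersetCard q).filter fun Q ↦ ∀ i j, i ≠ j → Disjoint (Q i) (Q j)

theorem mem_disjointTuples {A : Finset α} {q t : ℕ} {Q : Fin t → Finset α} :
    Q ∈ disjointTuples A q t ↔ (∀ j, Q j ∈ A.powersetCard q) ∧ Pairwise (Disjoint on Q) := by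
  simp [disjointTuples, Pairwise, onFun]

theorem card_filter_apply_eq_card_disjointTuples_sdiff {A Q : Finset α} {q s : ℕ} (j : Fin (s + 1))
    (hQ : Q ∈ A.powersetCard q) :
    #((disjointTuples A q (s + 1)).filter (· j = Q)) = #(disjointTuples (A \ Q) q s) := by
  apply card_nbij' (Fin.removeNth j) (Fin.insertNth j Q)
  · intro f hf
    simp only [coe_filter, Set.mem_ofPred_eq, mem_disjointTuples] at hf
    obtain ⟨⟨hfA, hfd⟩, rfl⟩ := hf
    refine mem_disjointTuples.2 ⟨fun i ↦ ?_, hfd.comp_of_injective (Fin.succAbove_right_injective)⟩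
    obtain ⟨hsub, hcard⟩ := mem_powersetCard.1 (hfA (j.succAbove i))
    exact mem_powersetCard.2 ⟨subset_sdiff.2 ⟨hsub, hfd (Fin.succAbove_ne j i)⟩, hcard⟩
  · intro g hg
    obtain ⟨hgA, hgd⟩ := mem_disjointTuples.1 (mem_coe.1 hg)
    have hgQ : ∀ i, g i ⊆ A ∧ Disjoint (g i) Q := fun i ↦
      subset_sdiff.1 (mem_powersetCard.1 (hgA i)).1
    simp only [coe_filter, Set.mem_ofPred_eq, mem_disjointTuples, Fin.insertNth_apply_same,
      and_true]
    refine ⟨(Fin.forall_iff_succAbove j).2 ⟨by simpa using hQ, fun i ↦ ?_⟩, ?_⟩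
    · simpa using mem_powersetCard.2 ⟨(hgQ i).1, (mem_powersetCard.1 (hgA i)).2⟩
    · intro i i' hii'
      simp only [onFun]
      induction i using Fin.succAboveCases j <;> induction i' using Fin.succAboveCases j
      · exact absurd rfl hii'
      · simpa using (hgQ _).2.symm
      · simpa using (hgQ _).2
      · simpa using hgd (fun h ↦ hii' (congrArg _ h))
  · intro f hf
    simp only [coe_filter, Set.mem_ofPred_eq] at hf
    simp [← hf.2]
  · intro g _
    simp

theorem card_disjointTuples (A : Finset α) (q t : ℕ) :
    #(disjointTuples A q t) = ∏ i ∈ range t, (#A - i * q).choose q := by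
  induction t generalizing A with
  | zero => rfl
  | succ s ih =>
    have hfib : ∀ Q ∈ A.powersetCard q,
        #((disjointTuples A q (s + 1)).filter (· 0 = Q)) =
          ∏ i ∈ range s, (#A - (i + 1) * q).choose q := by
      intro Q hQ
      obtain ⟨hQA, hQq⟩ := mem_powersetCard.1 hQ
      rw [card_filter_apply_eq_card_disjointTuples_sdiff 0 hQ, ih, card_sdiff_of_subset hQA, hQq]
      simp only [Nat.sub_sub, add_mul, one_mul, add_comm q]
    rw [card_eq_sum_card_fiberwise (f := (· 0)) (t := A.powersetCard q)
        fun f hf ↦ (mem_disjointTuples.1 hf).1 0,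
      sum_congr rfl hfib, sum_const, card_powersetCard, smul_eq_mul, prod_range_succ']
    simp [mul_comm]

theorem choose_le_mul_card_filter_of_forall_disjointTuples {A : Finset α} {q t : ℕ}
    (P : Finset α → Prop) [DecidablePred P]
    (hP : ∀ Q ∈ disjointTuples A q t, ∃ j, P (Q j)) (hq : t * q ≤ #A) :
    (#A).choose q ≤ t * #((A.powersetCard q).filter P) := by
  obtain _ | s := t
  · obtain ⟨j, -⟩ := hP Fin.elim0 (mem_disjointTuples.2 ⟨fun j ↦ j.elim0, fun i ↦ i.elim0⟩)
    exact j.elim0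
  set G := (A.powersetCard q).filter P
  set c := ∏ i ∈ range s, (#A - (i + 1) * q).choose q
  have hc : 0 < c := prod_pos fun i hi ↦ Nat.choose_pos <| by
    have : (i + 1) * q + q ≤ (s + 1) * q := by
      rw [← Nat.succ_mul]; exact Nat.mul_le_mul_right q (by simpa using hi)
    omega
  have hfib : ∀ p ∈ univ ×ˢ G, #((disjointTuples A q (s + 1)).filter (· p.1 = p.2)) = c := by
    rintro ⟨j, Q⟩ hp
    obtain ⟨hQ, -⟩ := mem_filter.1 (mem_product.1 hp).2
    obtain ⟨hQA, hQq⟩ := mem_powersetCard.1 hQ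
    rw [card_filter_apply_eq_card_disjointTuples_sdiff j hQ, card_disjointTuples,
      card_sdiff_of_subset hQA, hQq]
    simp only [c, Nat.sub_sub, add_mul, one_mul, add_comm q]
  have hcover : disjointTuples A q (s + 1) ⊆
      (univ ×ˢ G).biUnion fun p ↦ (disjointTuples A q (s + 1)).filter (· p.1 = p.2) := by
    intro f hf
    obtain ⟨j, hj⟩ := hP f hf
    exact mem_biUnion.2 ⟨(j, f j), mem_product.2 ⟨mem_univ j,
      mem_filter.2 ⟨(mem_disjointTuples.1 hf).1 j, hj⟩⟩, mem_filter.2 ⟨hf, rfl⟩⟩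
  have key : (#A).choose q * c ≤ (s + 1) * #G * c := calc
    (#A).choose q * c = #(disjointTuples A q (s + 1)) := by
      rw [card_disjointTuples, prod_range_succ', mul_comm]; simp [c]
    _ ≤ ∑ p ∈ univ ×ˢ G, #((disjointTuples A q (s + 1)).filter (· p.1 = p.2)) :=
      (card_le_card hcover).trans card_biUnion_le
    _ = (s + 1) * #G * c := by
      rw [sum_congr rfl hfib, sum_const, card_product, card_univ, Fintype.card_fin, smul_eq_mul]
  exact Nat.le_of_mul_le_mul_right key hc

end DisjointTuples

section OneFocal

variable {n r : ℕ} {F : Finset (Finset (Fin n))} {A : Finset (Fin n)}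

theorem containsOneFocalFamily_of_pairwise_disjoint (hA : A ∈ F)
    (Q : Fin (r - 1) → Finset (Fin n)) (hQ : Pairwise (Disjoint on Q))
    (hsup : ∀ j, r ≤ #(F.filter (A \ Q j ⊆ ·))) : ContainsOneFocalFamily F r := by
  set T : Fin (r - 1) → Finset (Finset (Fin n)) := fun j ↦ (F.filter (A \ Q j ⊆ ·)).erase A
  have hT : ∀ j, r - 1 ≤ #(T j) := fun j ↦ by
    rw [card_erase_of_mem (mem_filter.2 ⟨hA, sdiff_subset⟩)]
    exact Nat.sub_le_sub_right (hsup j) 1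
  have hall : ∀ s : Finset (Fin (r - 1)), #s ≤ #(s.biUnion T) := by
    intro s
    obtain rfl | ⟨j, hj⟩ := s.eq_empty_or_nonempty
    · simp
    · calc #s ≤ r - 1 := by simpa using card_le_univ s
        _ ≤ #(T j) := hT j
        _ ≤ #(s.biUnion T) := card_le_card (subset_biUnion_of_mem T hj)
  obtain ⟨B, hBinj, hBT⟩ := (all_card_le_biUnion_card_iff_exists_injective T).1 hall
  have hBF : ∀ j, B j ∈ F ∧ A \ Q j ⊆ B j := fun j ↦ mem_filter.1 (mem_of_mem_erase (hBT j))
  refine ⟨A, hA, B, fun j ↦ (hBF j).1, hBinj, fun j ↦ ne_of_mem_erase (hBT j), ?_⟩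
  have hmiss : ∀ i ∈ A, ∀ j, i ∉ B j → i ∈ Q j := fun i hi j hij ↦ by
    by_contra hiQ
    exact hij ((hBF j).2 (mem_sdiff.2 ⟨hi, hiQ⟩))
  intro i hi j j' hij hij'
  by_contra hne
  exact disjoint_left.1 (hQ hne) (hmiss i hi j hij) (hmiss i hi j' hij')

theorem choose_le_mul_card_rare_of_not_containsOneFocalFamily
    (hF : ¬ ContainsOneFocalFamily F r) (hA : A ∈ F) :
    (#A).choose (#A / (r - 1)) ≤
      (r - 1) * #((A.powersetCard (#A - #A / (r - 1))).filter fun S ↦ #(F.filter (S ⊆ ·)) < r) := by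
  set q := #A / (r - 1)
  have hgood := choose_le_mul_card_filter_of_forall_disjointTuples
    (A := A) (q := q) (t := r - 1) (fun Q ↦ #(F.filter (A \ Q ⊆ ·)) < r) (fun Q hQ ↦ by
      by_contra! hbig
      exact hF (containsOneFocalFamily_of_pairwise_disjoint hA Q (mem_disjointTuples.1 hQ).2 hbig))
    (Nat.mul_div_le _ _)
  exact hgood.trans_eq (congrArg _ (card_filter_sdiff_powersetCard (Nat.div_le_self _ _)
    fun S ↦ #(F.filter (S ⊆ ·)) < r))

theorem card_filter_card_eq_mul_choose_le (hF : ¬ ContainsOneFocalFamily F r) (a : ℕ) :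
    #(F.filter (#· = a)) * a.choose (a / (r - 1)) ≤ (r - 1) ^ 2 * n.choose (a - a / (r - 1)) := by
  set Fa := F.filter (#· = a)
  set rare : Finset (Fin n) → Prop := fun S ↦ #(F.filter (S ⊆ ·)) < r
  calc #Fa * a.choose (a / (r - 1))
      = ∑ A ∈ Fa, (#A).choose (#A / (r - 1)) := by
        rw [← smul_eq_mul, ← sum_const]
        exact sum_congr rfl fun A hA ↦ by rw [(mem_filter.1 hA).2]
    _ ≤ ∑ A ∈ Fa, (r - 1) * #((A.powersetCard (a - a / (r - 1))).filter rare) :=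
        sum_le_sum fun A hA ↦ by
          obtain ⟨hAF, hAa⟩ := mem_filter.1 hA
          simpa only [hAa] using choose_le_mul_card_rare_of_not_containsOneFocalFamily hF hAF
    _ = (r - 1) * ∑ S ∈ (univ.powersetCard (a - a / (r - 1))).filter rare,
          #(Fa.filter (S ⊆ ·)) := by
        rw [← mul_sum]
        congr 1
        simp only [card_eq_sum_ones]
        exact sum_comm' fun A S ↦ by simp only [mem_filter, mem_powersetCard, subset_univ]; tauto
    _ ≤ (r - 1) * ∑ S ∈ (univ.powersetCard (a - a / (r - 1))).filter rare, (r - 1) := by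
        gcongr with S hS
        exact Nat.le_sub_one_of_lt <|
          (card_le_card (filter_subset_filter _ (filter_subset _ F))).trans_lt (mem_filter.1 hS).2
    _ ≤ (r - 1) ^ 2 * n.choose (a - a / (r - 1)) := by
        rw [sum_const, smul_eq_mul, sq, mul_assoc, mul_comm _ (r - 1)]
        gcongr
        calc #((univ.powersetCard (a - a / (r - 1))).filter rare)
            ≤ #(univ.powersetCard (a - a / (r - 1))) := card_filter_le _ _
          _ = n.choose (a - a / (r - 1)) := by simp

end OneFocal

theorem choose_mul_pow_le_choose_sub_div_mul_pow (k a i : ℕ) :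
    a.choose i * k ^ i ≤ a.choose (a - a / (k + 1)) * k ^ (a - a / (k + 1)) := by
  have hd : k * (a / (k + 1)) + a / (k + 1) + a % (k + 1) = a := by
    have := Nat.div_add_mod a (k + 1); linarith
  have hmod : a % (k + 1) ≤ k := Nat.lt_succ_iff.1 (Nat.mod_lt a k.succ_pos)
  generalize a / (k + 1) = d at *
  have hstep : ∀ j, a.choose (j + 1) * k ^ (j + 1) * (j + 1) = a.choose j * k ^ j * (k * (a - j)) :=
    fun j ↦ by rw [mul_right_comm, Nat.choose_succ_right_eq]; ring
  -- the ratio `k (a - j) / (j + 1)` of consecutive terms is `≥ 1` exactly for `j < a - d`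
  rcases le_total i (a - d) with h | h
  · refine Nat.decreasingInduction (motive := fun i _ ↦ a.choose i * k ^ i ≤ _)
      (fun j hj ih ↦ le_trans (Nat.le_of_mul_le_mul_right ?_ j.succ_pos) ih) le_rfl h
    rw [hstep]
    gcongr
    have : k * (d + 1) ≤ k * (a - j) := Nat.mul_le_mul_left k (by omega)
    rw [mul_add_one] at this
    omega
  · induction i, h using Nat.le_induction with
    | base => exact le_rfl
    | succ j hj ih =>
      refine le_trans (Nat.le_of_mul_le_mul_right ?_ j.succ_pos) ih
      rw [hstep]
      gcongr
      have : k * (a - j) ≤ k * d := Nat.mul_le_mul_left k (by omega)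
      omega

theorem succ_pow_le_mul_choose_sub_div_mul_pow (k a : ℕ) :
    (k + 1) ^ a ≤ (a + 1) * (a.choose (a - a / (k + 1)) * k ^ (a - a / (k + 1))) := calc
  (k + 1) ^ a = ∑ i ∈ range (a + 1), a.choose i * k ^ i := by
    rw [add_pow]; simp [mul_comm]
  _ ≤ ∑ _i ∈ range (a + 1), a.choose (a - a / (k + 1)) * k ^ (a - a / (k + 1)) :=
    sum_le_sum fun i _ ↦ choose_mul_pow_le_choose_sub_div_mul_pow k a i
  _ = _ := by rw [sum_const, card_range, smul_eq_mul]

theorem choose_mul_pow_le_one_add_pow {R : Type*} [CommSemiring R] [PartialOrder R]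
    [IsOrderedRing R] {x : R} (hx : 0 ≤ x) (N m : ℕ) : (N.choose m : R) * x ^ m ≤ (1 + x) ^ N := by
  rcases lt_or_ge N m with h | h
  · simp [Nat.choose_eq_zero_of_lt h, pow_nonneg (add_nonneg zero_le_one hx)]
  rw [add_comm, add_pow]
  calc (N.choose m : R) * x ^ m = x ^ m * 1 ^ (N - m) * N.choose m := by ring
    _ ≤ ∑ i ∈ range (N + 1), x ^ i * 1 ^ (N - i) * N.choose i :=
      single_le_sum (f := fun i ↦ x ^ i * 1 ^ (N - i) * N.choose i)
        (fun i _ ↦ by simpa using mul_nonneg (pow_nonneg hx i) (Nat.cast_nonneg (N.choose i)))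
        (mem_range.2 (Nat.lt_succ_of_le h))

theorem succ_mul_sub_div_le (k a : ℕ) : (k + 1) * (a - a / (k + 1)) ≤ k * (a + k + 1) := by
  have hd : k * (a / (k + 1)) + a / (k + 1) + a % (k + 1) = a := by
    have := Nat.div_add_mod a (k + 1); linarith
  have hmod : a % (k + 1) ≤ k := Nat.lt_succ_iff.1 (Nat.mod_lt a k.succ_pos)
  have hsub : (k + 1) * (a - a / (k + 1)) = k * a + a % (k + 1) := by
    rw [Nat.mul_sub, Nat.sub_eq_iff_eq_add (Nat.mul_le_mul_left _ (Nat.div_le_self a _))]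
    nlinarith
  nlinarith

theorem choose_le_mul_one_add_pow {k : ℕ} (hk : 0 < k) (n a : ℕ) :
    (n.choose (a - a / (k + 1)) : ℝ) ≤ (a + 1) * ((k : ℝ) + 1) ^ (k + 1) *
      (1 + k / ((k : ℝ) + 1) ^ (((k : ℝ) + 1) / k)) ^ n * a.choose (a - a / (k + 1)) := by
  set m := a - a / (k + 1)
  set E := ((k : ℝ) + 1) ^ (((k : ℝ) + 1) / k)
  set x := (k : ℝ) / E
  have hk' : (0 : ℝ) < k := Nat.cast_pos.2 hk
  have hE : 0 < E := by positivity
  have hbin : (n.choose m : ℝ) * x ^ m ≤ (1 + x) ^ n :=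
    choose_mul_pow_le_one_add_pow (by positivity) n m
  have hmode : ((k : ℝ) + 1) ^ a ≤ (a + 1) * (a.choose m * (k : ℝ) ^ m) := by
    exact_mod_cast succ_pow_le_mul_choose_sub_div_mul_pow k a
  have hEm : E ^ m ≤ ((k : ℝ) + 1) ^ (a + k + 1) := by
    rw [← Real.rpow_natCast, ← Real.rpow_mul (by positivity), ← Real.rpow_natCast]
    apply Real.rpow_le_rpow_of_exponent_le (by linarith)
    rw [div_mul_eq_mul_div, div_le_iff₀ hk']
    exact_mod_cast (succ_mul_sub_div_le k a).trans_eq (mul_comm _ _)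
  have key : (n.choose m : ℝ) * (k : ℝ) ^ m ≤
      (a + 1) * ((k : ℝ) + 1) ^ (k + 1) * (1 + x) ^ n * a.choose m * (k : ℝ) ^ m := calc
    (n.choose m : ℝ) * (k : ℝ) ^ m = n.choose m * x ^ m * E ^ m := by
      rw [div_pow, mul_assoc, div_mul_cancel₀ _ (pow_pos hE m).ne']
    _ ≤ (1 + x) ^ n * ((k : ℝ) + 1) ^ (a + k + 1) := by gcongr
    _ = (1 + x) ^ n * ((k : ℝ) + 1) ^ (k + 1) * ((k : ℝ) + 1) ^ a := by ring
    _ ≤ (1 + x) ^ n * ((k : ℝ) + 1) ^ (k + 1) * ((a + 1) * (a.choose m * (k : ℝ) ^ m)) := by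
      gcongr
    _ = (a + 1) * ((k : ℝ) + 1) ^ (k + 1) * (1 + x) ^ n * a.choose m * (k : ℝ) ^ m := by ring
  exact le_of_mul_le_mul_right key (by positivity)

theorem card_le_of_not_containsOneFocalFamily {k n : ℕ} (hk : 0 < k)
    {F : Finset (Finset (Fin n))} (hF : ¬ ContainsOneFocalFamily F (k + 2)) :
    (#F : ℝ) ≤ ((k : ℝ) + 1) ^ (k + 3) * ((n : ℝ) + 1) ^ 2 *
      (1 + k / ((k : ℝ) + 1) ^ (((k : ℝ) + 1) / k)) ^ n := by
  set x := (k : ℝ) / ((k : ℝ) + 1) ^ (((k : ℝ) + 1) / k)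
  have hx : 0 ≤ x := by positivity
  have hclass : ∀ a ≤ n,
      (#(F.filter (#· = a)) : ℝ) ≤ ((k : ℝ) + 1) ^ (k + 3) * ((n : ℝ) + 1) * (1 + x) ^ n := by
    intro a ha
    have hnat := card_filter_card_eq_mul_choose_le hF a
    rw [show k + 2 - 1 = k + 1 by omega, ← Nat.choose_symm (Nat.div_le_self _ _)] at hnat
    have hreal : (#(F.filter (#· = a)) : ℝ) * a.choose (a - a / (k + 1)) ≤
        ((k : ℝ) + 1) ^ 2 * n.choose (a - a / (k + 1)) := by exact_mod_cast hnat
    have hpos : (0 : ℝ) < a.choose (a - a / (k + 1)) := by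
      exact_mod_cast Nat.choose_pos (Nat.sub_le _ _)
    have ha' : (a : ℝ) + 1 ≤ n + 1 := by exact_mod_cast Nat.succ_le_succ ha
    refine le_of_mul_le_mul_right (hreal.trans ?_) hpos
    calc ((k : ℝ) + 1) ^ 2 * n.choose (a - a / (k + 1))
        ≤ ((k : ℝ) + 1) ^ 2 * ((a + 1) * ((k : ℝ) + 1) ^ (k + 1) * (1 + x) ^ n *
            a.choose (a - a / (k + 1))) := by
          gcongr; exact choose_le_mul_one_add_pow hk n a
      _ = ((k : ℝ) + 1) ^ (k + 3) * (a + 1) * (1 + x) ^ n * a.choose (a - a / (k + 1)) := by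
          ring
      _ ≤ ((k : ℝ) + 1) ^ (k + 3) * (n + 1) * (1 + x) ^ n * a.choose (a - a / (k + 1)) := by
          gcongr
  calc (#F : ℝ) = ∑ a ∈ range (n + 1), (#(F.filter (#· = a)) : ℝ) := by
        exact_mod_cast card_eq_sum_card_fiberwise fun A _ ↦
          mem_range.2 (Nat.lt_succ_of_le (by simpa using card_le_univ A))
    _ ≤ ∑ _a ∈ range (n + 1), ((k : ℝ) + 1) ^ (k + 3) * ((n : ℝ) + 1) * (1 + x) ^ n :=
        sum_le_sum fun a ha ↦ hclass a (Nat.lt_succ_iff.1 (mem_range.1 ha))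
    _ = ((k : ℝ) + 1) ^ (k + 3) * ((n : ℝ) + 1) ^ 2 * (1 + x) ^ n := by
        rw [sum_const, card_range, nsmul_eq_mul]; push_cast; ring

theorem eventually_mul_add_one_sq_le_pow (C : ℝ) {ρ : ℝ} (hρ : 1 < ρ) :
    ∀ᶠ n : ℕ in atTop, C * ((n : ℝ) + 1) ^ 2 ≤ ρ ^ n := by
  have h := ((tendsto_pow_const_div_const_pow_of_one_lt 2 hρ).comp
    (tendsto_add_atTop_nat 1)).const_mul (C * ρ)
  rw [mul_zero] at h
  filter_upwards [h.eventually (gt_mem_nhds one_pos)] with n hn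
  have hρn : 0 < ρ ^ n := pow_pos (by linarith) n
  have : C * ρ * (((n + 1 : ℕ) : ℝ) ^ 2 / ρ ^ (n + 1)) = C * ((n : ℝ) + 1) ^ 2 / ρ ^ n := by
    push_cast; field_simp; ring
  rw [comp_apply, this, div_lt_one hρn] at hn
  exact hn.le

/-- For every `ε > 0` and all sufficiently large `n`, every family of subsets of `[n]`
containing no 1-focal family of size `r` has cardinality at most
`(1 + (r-2)/(r-1)^((r-1)/(r-2)) + ε)^n`. -/
theorem one_focal_asymptotic_upper_bound (r : ℕ) (hr : 3 ≤ r) :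
    ∀ ε : ℝ, 0 < ε → ∃ N : ℕ, ∀ n : ℕ, N ≤ n →
      ∀ F : Finset (Finset (Fin n)), ¬ ContainsOneFocalFamily F r →
        (F.card : ℝ) ≤
          (1 + ((r : ℝ) - 2) / ((r : ℝ) - 1) ^ (((r : ℝ) - 1) / ((r : ℝ) - 2)) + ε) ^ n := by
  intro ε hε
  obtain ⟨k, rfl⟩ : ∃ k, r = k + 2 := ⟨r - 2, by omega⟩
  have hk : 0 < k := by omega
  set x := (k : ℝ) / ((k : ℝ) + 1) ^ (((k : ℝ) + 1) / k)
  have hxr : (((k + 2 : ℕ) : ℝ) - 2) / (((k + 2 : ℕ) : ℝ) - 1) ^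
      ((((k + 2 : ℕ) : ℝ) - 1) / (((k + 2 : ℕ) : ℝ) - 2)) = x := by
    push_cast
    rw [add_sub_cancel_right, show (k : ℝ) + 2 - 1 = k + 1 by ring]
  have hx : 0 < 1 + x := by positivity
  have hρ : 1 < (1 + x + ε) / (1 + x) := by rw [one_lt_div hx]; linarith
  obtain ⟨N, hN⟩ := eventually_atTop.1 (eventually_mul_add_one_sq_le_pow ((k + 1) ^ (k + 3)) hρ)
  refine ⟨N, fun n hn F hF ↦ ?_⟩
  rw [hxr]
  calc (#F : ℝ) ≤ ((k : ℝ) + 1) ^ (k + 3) * ((n : ℝ) + 1) ^ 2 * (1 + x) ^ n :=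
        card_le_of_not_containsOneFocalFamily hk hF
    _ ≤ ((1 + x + ε) / (1 + x)) ^ n * (1 + x) ^ n := by gcongr; exact hN n hn
    _ = (1 + x + ε) ^ n := by rw [← mul_pow, div_mul_cancel₀ _ hx.ne']
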